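/- arXiv:2510.18567 — 4 statements merged into one kernel-verified Lean document; each statement's English description precedes it below -/
import Mathlib

section
/- Let Δ > 0 and c_min ≥ 1/4 be real numbers such that X := (4·c_min − 1)/(4Δ) ≥ 1/2. Then for every real x with X ≤ x ≤ 1, one has (1 + 4Δx)/(4·c_min) ≥ 1 and 1/4 − (1 − x)·(1/2) ≥ (1/(8Δ))·log((1 + 4Δx)/(4·c_min)). -/
/-!
Write `4 cmin = 1 + 4ΔX`, so the shrinkage factor is `r = (1 + 4Δx)/(1 + 4ΔX) ≥ 1`. By
`log r ≤ r - 1`, the potential term is at most `(x - X)/(2(1 + 4ΔX))`, and this is at most the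
regret `x/2 - 1/4` exactly when `1/2 - X ≤ 2ΔX(2x - 1)`, which holds because `x ≥ X ≥ 1/2`.
-/

open Real

section ShrinkageFactor

variable {Δ X x : ℝ}

lemma one_le_shrinkage_factor (hΔ : 0 < Δ) (hX : 0 ≤ X) (hx : X ≤ x) :
    1 ≤ (1 + 4 * Δ * x) / (1 + 4 * Δ * X) := by
  rw [one_le_div (by positivity)]
  nlinarith

lemma log_shrinkage_factor_le (hΔ : 0 < Δ) (hX : 0 ≤ X) (hx : X ≤ x) :
    log ((1 + 4 * Δ * x) / (1 + 4 * Δ * X)) ≤ 4 * Δ * (x - X) / (1 + 4 * Δ * X) := by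
  have hpos : 0 < 1 + 4 * Δ * X := by positivity
  calc log ((1 + 4 * Δ * x) / (1 + 4 * Δ * X))
      ≤ (1 + 4 * Δ * x) / (1 + 4 * Δ * X) - 1 :=
        log_le_sub_one_of_pos (one_pos.trans_le (one_le_shrinkage_factor hΔ hX hx))
    _ = 4 * Δ * (x - X) / (1 + 4 * Δ * X) := by field_simp; ring

lemma log_shrinkage_factor_div_le_regret (hΔ : 0 < Δ) (hX : 1 / 2 ≤ X) (hx : X ≤ x) :
    1 / (8 * Δ) * log ((1 + 4 * Δ * x) / (1 + 4 * Δ * X)) ≤ 1 / 4 - (1 - x) * (1 / 2) := by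
  have hX0 : 0 ≤ X := by linarith
  have hpos : 0 < 1 + 4 * Δ * X := by positivity
  calc 1 / (8 * Δ) * log ((1 + 4 * Δ * x) / (1 + 4 * Δ * X))
      ≤ 1 / (8 * Δ) * (4 * Δ * (x - X) / (1 + 4 * Δ * X)) := by
        gcongr
        exact log_shrinkage_factor_le hΔ hX0 hx
    _ = (x - X) / (2 * (1 + 4 * Δ * X)) := by field_simp; ring
    _ ≤ 1 / 4 - (1 - x) * (1 / 2) := by
        rw [div_le_iff₀ (by positivity)]
        nlinarith [mul_nonneg (mul_nonneg hΔ.le hX0) (by linarith : (0 : ℝ) ≤ 2 * x - 1)]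

end ShrinkageFactor

theorem stmt3_general (Δ cmin : ℝ) (hΔ : 0 < Δ)
    (X : ℝ) (hX : X = (4 * cmin - 1) / (4 * Δ)) (hXhalf : X ≥ 1/2) :
    ∀ x : ℝ, X ≤ x → x ≤ 1 →
      (1 + 4*Δ*x) / (4*cmin) ≥ 1 ∧
      1/4 - (1 - x) * (1/2) ≥ (1/(8*Δ)) * Real.log ((1 + 4*Δ*x) / (4*cmin)) := by
  intro x hXx _
  have hcmin : 4 * cmin = 1 + 4 * Δ * X := by
    rw [hX]
    field_simp
    ring
  rw [hcmin]
  exact ⟨one_le_shrinkage_factor hΔ (by linarith) hXx,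
    log_shrinkage_factor_div_le_regret hΔ hXhalf hXx⟩

/-- Potential-function step in Case (ii) of Lemma 3.5: the immediate regret dominates
(1/(8Δ)) times the logarithm of the shrinkage factor of the hypothesis set. -/
theorem stmt3 (Δ cmin : ℝ) (hΔ : 0 < Δ) (hc : cmin ≥ 1/4)
    (X : ℝ) (hX : X = (4 * cmin - 1) / (4 * Δ)) (hXhalf : X ≥ 1/2) :
    ∀ x : ℝ, X ≤ x → x ≤ 1 →
      (1 + 4*Δ*x) / (4*cmin) ≥ 1 ∧
      1/4 - (1 - x) * (1/2) ≥ (1/(8*Δ)) * Real.log ((1 + 4*Δ*x) / (4*cmin)) :=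
  stmt3_general Δ cmin hΔ X hX hXhalf
end

section
/- Let Δ be real with 0 < Δ ≤ 1/8, let e = exp 1 denote Euler's number, set s = √(4Δ² + 28Δ + 1) and γ = (3 + 2Δ + s)/(8e). Then x⁽²⁾ := 8Δ/(2Δ + s − 1) satisfies x⁽²⁾·(1/(2e)) − 1/(4e) = x⁽²⁾·γ − (1/(4e) + Δ/e), and x⁽²⁾ ≥ 1/2 + 3Δ − 24Δ². -/
/-!
The critical contract is the ratio of the cost gap `Δ/e` to the reward gap `(2Δ + s - 1)/(8e)`
of the two actions, which gives the indifference identity. Rationalising the denominator with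
`s² - (2Δ - 1)² = 32Δ` turns `x⁽²⁾` into `(1 - 2Δ + s)/4`, so the lower bound amounts to
`1 + 14Δ - 96Δ² ≤ s`. When the left side is nonnegative this follows by squaring, since
`s² - (1 + 14Δ - 96Δ²)² = 384Δ³(7 - 24Δ)` and a nonnegative left side forces `Δ < 7/24`.
-/

def criticalContract {K : Type*} [Field K] (r₁ c₁ r₂ c₂ : K) : K :=
  (c₂ - c₁) / (r₂ - r₁)

theorem criticalContract_mul_sub_eq {K : Type*} [Field K] {r₁ c₁ r₂ c₂ : K}
    (hr : r₂ - r₁ ≠ 0) :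
    criticalContract r₁ c₁ r₂ c₂ * r₁ - c₁ = criticalContract r₁ c₁ r₂ c₂ * r₂ - c₂ := by
  unfold criticalContract
  field_simp
  ring

section RewardContext

variable {Δ : ℝ}

theorem sq_sqrt_rewardContext (hΔ : 0 < Δ) :
    √(4 * Δ ^ 2 + 28 * Δ + 1) ^ 2 = 4 * Δ ^ 2 + 28 * Δ + 1 :=
  Real.sq_sqrt (by positivity)

theorem two_mul_add_sqrt_sub_one_pos (hΔ : 0 < Δ) :
    0 < 2 * Δ + √(4 * Δ ^ 2 + 28 * Δ + 1) - 1 := by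
  have : 1 + 2 * Δ < √(4 * Δ ^ 2 + 28 * Δ + 1) := Real.lt_sqrt_of_sq_lt (by nlinarith)
  linarith

theorem rewardGap_rewardContext (e : ℝ) :
    (3 + 2 * Δ + √(4 * Δ ^ 2 + 28 * Δ + 1)) / (8 * e) - 1 / (2 * e)
      = (2 * Δ + √(4 * Δ ^ 2 + 28 * Δ + 1) - 1) / (8 * e) := by
  ring

theorem criticalContract_rewardContext {e : ℝ} (hΔ : 0 < Δ) (he : e ≠ 0) :
    criticalContract (1 / (2 * e)) (1 / (4 * e))
        ((3 + 2 * Δ + √(4 * Δ ^ 2 + 28 * Δ + 1)) / (8 * e)) (1 / (4 * e) + Δ / e)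
      = 8 * Δ / (2 * Δ + √(4 * Δ ^ 2 + 28 * Δ + 1) - 1) := by
  have hD := (two_mul_add_sqrt_sub_one_pos hΔ).ne'
  rw [criticalContract, rewardGap_rewardContext, add_sub_cancel_left]
  field_simp

theorem div_two_mul_add_sqrt_sub_one_eq (hΔ : 0 < Δ) :
    8 * Δ / (2 * Δ + √(4 * Δ ^ 2 + 28 * Δ + 1) - 1)
      = (1 - 2 * Δ + √(4 * Δ ^ 2 + 28 * Δ + 1)) / 4 := by
  rw [div_eq_div_iff (two_mul_add_sqrt_sub_one_pos hΔ).ne' four_ne_zero]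
  nlinarith [sq_sqrt_rewardContext hΔ]

theorem le_sqrt_rewardContext (hΔ : 0 < Δ) :
    1 + 14 * Δ - 96 * Δ ^ 2 ≤ √(4 * Δ ^ 2 + 28 * Δ + 1) := by
  rcases le_or_gt (1 + 14 * Δ - 96 * Δ ^ 2) 0 with hneg | hpos
  · exact hneg.trans (Real.sqrt_nonneg _)
  · have hsmall : 24 * Δ ≤ 7 := by nlinarith
    refine Real.le_sqrt_of_sq_le ?_
    nlinarith [mul_nonneg (pow_nonneg hΔ.le 3) (sub_nonneg.mpr hsmall)]

end RewardContext

theorem stmt10_general (Δ : ℝ) (hΔ : 0 < Δ) (e : ℝ) (he : e = Real.exp 1)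
    (s : ℝ) (hs : s = Real.sqrt (4*Δ^2 + 28*Δ + 1))
    (γ : ℝ) (hγ : γ = (3 + 2*Δ + s)/(8*e)) :
    (8*Δ/(2*Δ + s - 1)) * (1/(2*e)) - 1/(4*e)
      = (8*Δ/(2*Δ + s - 1)) * γ - (1/(4*e) + Δ/e) ∧
    8*Δ/(2*Δ + s - 1) ≥ 1/2 + 3*Δ - 24*Δ^2 := by
  subst hs hγ
  have he0 : e ≠ 0 := he ▸ (Real.exp_pos 1).ne'
  have hr : (3 + 2 * Δ + √(4 * Δ ^ 2 + 28 * Δ + 1)) / (8 * e) - 1 / (2 * e) ≠ 0 := by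
    rw [rewardGap_rewardContext]
    exact div_ne_zero (two_mul_add_sqrt_sub_one_pos hΔ).ne' (mul_ne_zero (by norm_num) he0)
  refine ⟨?_, ?_⟩
  · rw [← criticalContract_rewardContext hΔ he0]
    exact criticalContract_mul_sub_eq hr
  · rw [div_two_mul_add_sqrt_sub_one_eq hΔ]
    linarith [le_sqrt_rewardContext hΔ]

/-- Critical-points lemma of the reward-context known-action instance. -/
theorem stmt10 (Δ : ℝ) (hΔ : 0 < Δ) (hΔ8 : Δ ≤ 1/8) (e : ℝ) (he : e = Real.exp 1)
    (s : ℝ) (hs : s = Real.sqrt (4*Δ^2 + 28*Δ + 1))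
    (γ : ℝ) (hγ : γ = (3 + 2*Δ + s)/(8*e)) :
    (8*Δ/(2*Δ + s - 1)) * (1/(2*e)) - 1/(4*e)
      = (8*Δ/(2*Δ + s - 1)) * γ - (1/(4*e) + Δ/e) ∧
    8*Δ/(2*Δ + s - 1) ≥ 1/2 + 3*Δ - 24*Δ^2 :=
  stmt10_general Δ hΔ e he s hs γ hγ
end

section
/- Let Ā be a finite set, r̄ : Ā → ℝ, c̄ : Ā → ℝ, and c₀ ∈ ℝ. For ρ ∈ ℝ define Π(ρ) = sup {(1 − x)·ρ : x ∈ [0,1], ∀ ā ∈ Ā, x·ρ − c₀ ≥ x·r̄(ā) − c̄(ā)} (with the convention sup ∅ = 0). Then for all real numbers ρ, ρ' with 0 ≤ ρ ≤ ρ', one has Π(ρ) ≤ Π(ρ'). -/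
/-! A contract feasible for a reward `ρ` stays feasible for any larger reward `ρ'`, because the
agent's utility `x * ρ - c₀` from the target action only grows, and it earns the principal
`(1 - x) * ρ' ≥ (1 - x) * ρ`. Taking suprema needs some care with the convention `sSup ∅ = 0`:
the right-hand supremum is nonnegative since all principal utilities are. -/

open Set

lemma sSup_image_le_sSup_image_of_nonneg {α : Type*} {s t : Set α} {f g : α → ℝ}
    (hst : s ⊆ t) (hfg : ∀ x ∈ s, f x ≤ g x) (hbdd : BddAbove (g '' t))
    (hg : ∀ x ∈ t, 0 ≤ g x) :
    sSup (f '' s) ≤ sSup (g '' t) :=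
  Real.sSup_le
    (forall_mem_image.2 fun x hx => (hfg x hx).trans (le_csSup hbdd (mem_image_of_mem g (hst hx))))
    (Real.sSup_nonneg (forall_mem_image.2 hg))

def linearContractsImplementing {A : Type*} (rbar cbar : A → ℝ) (c₀ ρ : ℝ) : Set ℝ :=
  {x : ℝ | x ∈ Icc (0:ℝ) 1 ∧ ∀ a : A, x * ρ - c₀ ≥ x * rbar a - cbar a}

lemma linearContractsImplementing_mono {A : Type*} {rbar cbar : A → ℝ} {c₀ ρ ρ' : ℝ}
    (hle : ρ ≤ ρ') :
    linearContractsImplementing rbar cbar c₀ ρ ⊆ linearContractsImplementing rbar cbar c₀ ρ' :=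
  fun x ⟨hx, hfeas⟩ => ⟨hx, fun a => by nlinarith [hfeas a, hx.1]⟩

lemma principalUtility_mem_Icc {x ρ : ℝ} (hx : x ∈ Icc (0:ℝ) 1) (hρ : 0 ≤ ρ) :
    (1 - x) * ρ ∈ Icc 0 ρ :=
  ⟨mul_nonneg (by linarith [hx.2]) hρ, by nlinarith [hx.1]⟩

theorem stmt15_general {A : Type*} (rbar cbar : A → ℝ) (c₀ : ℝ)
    (P : ℝ → ℝ)
    (hPdef : ∀ ρ : ℝ, P ρ = sSup ((fun x : ℝ => (1 - x) * ρ) ''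
      {x : ℝ | x ∈ Set.Icc (0:ℝ) 1 ∧
        ∀ a : A, x * ρ - c₀ ≥ x * rbar a - cbar a})) :
    ∀ ρ ρ' : ℝ, 0 ≤ ρ → ρ ≤ ρ' → P ρ ≤ P ρ' := by
  intro ρ ρ' hρ hle
  have hρ' : 0 ≤ ρ' := hρ.trans hle
  rw [hPdef, hPdef]
  refine sSup_image_le_sSup_image_of_nonneg (t := linearContractsImplementing rbar cbar c₀ ρ')
    (linearContractsImplementing_mono hle) ?_ ⟨ρ', ?_⟩ ?_
  · exact fun x hx => mul_le_mul_of_nonneg_left hle (sub_nonneg.2 hx.1.2)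
  · exact forall_mem_image.2 fun x hx => (principalUtility_mem_Icc hx.1 hρ').2
  · exact fun x hx => (principalUtility_mem_Icc hx.1 hρ').1

/-- Lemma 'monotone reward profit' (lem:monotone reward profit). -/
theorem stmt15 {A : Type*} [Fintype A] (rbar cbar : A → ℝ) (c₀ : ℝ)
    (P : ℝ → ℝ)
    (hPdef : ∀ ρ : ℝ, P ρ = sSup ((fun x : ℝ => (1 - x) * ρ) ''
      {x : ℝ | x ∈ Set.Icc (0:ℝ) 1 ∧
        ∀ a : A, x * ρ - c₀ ≥ x * rbar a - cbar a})) :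
    ∀ ρ ρ' : ℝ, 0 ≤ ρ → ρ ≤ ρ' → P ρ ≤ P ρ' :=
  stmt15_general rbar cbar c₀ P hPdef
end

section
/- Let A⁻ be a nonempty finite set, r : A⁻ → ℝ and c : A⁻ → ℝ, and let Δ > 0 and c* ∈ ℝ satisfy c* − c(a) ≥ Δ for all a ∈ A⁻. Define φ(x) = ((max_{a ∈ A⁻}(x·r(a) − c(a))) + c*)/x for x > 0. Then for all real x₁, x₂ with 0 < x₁ ≤ x₂ ≤ 1, one has φ(x₂) ≤ φ(x₁) − Δ·(x₂ − x₁). -/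
/-!
For a single action `a` the reward level is `(x * r a - c a + c*) / x = r a + (c* - c a) / x`,
and on `(0, 1]` the function `1 / x` decreases at rate at least `1`, so this level decreases at
rate at least `c* - c a ≥ Δ`. Evaluating at an action attaining the maximum at `x₂` transfers the
bound to `φ`, since at `x₁` the same action only gives a lower bound for the maximum.
-/

theorem one_div_le_one_div_sub_of_le_one {x₁ x₂ : ℝ} (h₁ : 0 < x₁) (h₁₂ : x₁ ≤ x₂)
    (h₂ : x₂ ≤ 1) : 1 / x₂ ≤ 1 / x₁ - (x₂ - x₁) := by
  have hx₂ : 0 < x₂ := h₁.trans_le h₁₂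
  have hdiff : 1 / x₁ - 1 / x₂ = (x₂ - x₁) / (x₁ * x₂) := by field_simp
  have hprod : x₁ * x₂ ≤ 1 := by nlinarith
  have := le_div_self (sub_nonneg.mpr h₁₂) (mul_pos h₁ hx₂) hprod
  linarith

theorem mul_add_div_le_mul_add_div_sub {x₁ x₂ r g Δ : ℝ} (h₁ : 0 < x₁) (h₁₂ : x₁ ≤ x₂)
    (h₂ : x₂ ≤ 1) (hΔ : 0 ≤ Δ) (hg : Δ ≤ g) :
    (x₂ * r + g) / x₂ ≤ (x₁ * r + g) / x₁ - Δ * (x₂ - x₁) := by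
  have hx₂ : 0 < x₂ := h₁.trans_le h₁₂
  have hsplit : ∀ x : ℝ, 0 < x → (x * r + g) / x = r + g * (1 / x) := fun x hx => by
    field_simp
  calc (x₂ * r + g) / x₂ = r + g * (1 / x₂) := hsplit x₂ hx₂
    _ ≤ r + g * (1 / x₁ - (x₂ - x₁)) := by
      gcongr
      · exact hΔ.trans hg
      · exact one_div_le_one_div_sub_of_le_one h₁ h₁₂ h₂
    _ = r + g * (1 / x₁) - g * (x₂ - x₁) := by ring
    _ ≤ r + g * (1 / x₁) - Δ * (x₂ - x₁) := by gcongr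
    _ = (x₁ * r + g) / x₁ - Δ * (x₂ - x₁) := by rw [hsplit x₁ h₁]

/-- One-sided Lipschitz decrease of the min-pay reward function φ, the core of
Lemmas 'contract distance case i' and 'contract distance case ii'. -/
theorem stmt18 {A : Type*} [Fintype A] [Nonempty A] (r c : A → ℝ)
    (Δ cstar : ℝ) (hΔ : 0 < Δ) (hgap : ∀ a : A, cstar - c a ≥ Δ)
    (φ : ℝ → ℝ)
    (hφ : ∀ x : ℝ, 0 < x →
      φ x = ((Finset.univ.sup' Finset.univ_nonempty (fun a : A => x * r a - c a))
              + cstar) / x) :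
    ∀ x₁ x₂ : ℝ, 0 < x₁ → x₁ ≤ x₂ → x₂ ≤ 1 → φ x₂ ≤ φ x₁ - Δ * (x₂ - x₁) := by
  intro x₁ x₂ h₁ h₁₂ h₂
  rw [hφ x₁ h₁, hφ x₂ (h₁.trans_le h₁₂)]
  obtain ⟨a, -, ha⟩ :=
    Finset.exists_mem_eq_sup' Finset.univ_nonempty (fun a : A => x₂ * r a - c a)
  have hsplit : ∀ x : ℝ, x * r a - c a + cstar = x * r a + (cstar - c a) := fun x => by ring
  calc (Finset.univ.sup' _ (fun a : A => x₂ * r a - c a) + cstar) / x₂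
      = (x₂ * r a + (cstar - c a)) / x₂ := by rw [ha, hsplit]
    _ ≤ (x₁ * r a + (cstar - c a)) / x₁ - Δ * (x₂ - x₁) :=
      mul_add_div_le_mul_add_div_sub h₁ h₁₂ h₂ hΔ.le (hgap a)
    _ ≤ (Finset.univ.sup' _ (fun a : A => x₁ * r a - c a) + cstar) / x₁ - Δ * (x₂ - x₁) := by
      rw [← hsplit]
      gcongr
      exact Finset.le_sup' (fun a : A => x₁ * r a - c a) (Finset.mem_univ a)
end
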